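/- arXiv:2503.15804 — 6 statements merged into one kernel-verified Lean document; each statement's English description precedes it below -/
import Mathlib

section
/- Suppose X(t) ∈ ℝ^{N×n} is defined for integers t ≥ −1 and satisfies, for every integer t ≥ 0, X(t+1) = ((1−cα)I + cαW(t+1))·(2X(t) − X(t−1) − α∇F(X(t)) + α∇F(X(t−1))). Define D(t) = (1/α)(X(t−1) − X(t)) − ∇F(X(t−1)) for t ≥ 0. Then for every integer t ≥ 0 one has D(t+1) = D(t) + c(I − W(t+1))(X(t) − α∇F(X(t)) − αD(t)) and X(t+1) = X(t) − α∇F(X(t)) − αD(t+1). -/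
open Matrix
set_option linter.unusedVariables false

noncomputable def Jmat (N : ℕ) : Matrix (Fin N) (Fin N) ℝ :=
  Matrix.of fun _ _ => (N : ℝ)⁻¹

noncomputable def gradF {N n : ℕ}
    (g : Fin N → EuclideanSpace ℝ (Fin n) → EuclideanSpace ℝ (Fin n))
    (X : Matrix (Fin N) (Fin n) ℝ) : Matrix (Fin N) (Fin n) ℝ :=
  Matrix.of fun i => (WithLp.equiv 2 (Fin n → ℝ))
    (g i ((WithLp.equiv 2 (Fin n → ℝ)).symm (X i)))

/-!
Writing `M = X(t) − α∇F(X(t)) − αD(t)`, the definition of `D(t)` turns the two-step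
argument `2X(t) − X(t−1) − α∇F(X(t)) + α∇F(X(t−1))` into `M`, and the mixing matrix
`(1 − cα)I + cαW` sends `M` to `M − cα(I − W)M`. Hence `X(t+1) = M − cα(I − W)M`, and
substituting this into the definition of `D(t+1)` gives both identities.
-/

theorem mixing_mul_eq_sub {R m k : Type*} [CommRing R] [Fintype m] [DecidableEq m]
    (W : Matrix m m R) (a : R) (M : Matrix m k R) :
    ((1 - a) • (1 : Matrix m m R) + a • W) * M = M - a • ((1 - W) * M) := by
  rw [Matrix.add_mul, Matrix.sub_mul, Matrix.smul_mul, Matrix.smul_mul, Matrix.one_mul]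
  module

section FedCETStep

variable {𝕜 : Type*} [Field 𝕜]

theorem two_step_eq_of_eq_inv_smul_sub {E : Type*} [AddCommGroup E] [Module 𝕜 E]
    {α : 𝕜} (hα : α ≠ 0) {Xprev X Gprev G D : E} (hD : D = α⁻¹ • (Xprev - X) - Gprev) :
    (2 : 𝕜) • X - Xprev - α • G + α • Gprev = X - α • G - α • D := by
  rw [hD, smul_sub, smul_smul, mul_inv_cancel₀ hα, one_smul]
  module

variable {m k : Type*} [Fintype m] [DecidableEq m]

theorem fedcet_step {α : 𝕜} (hα : α ≠ 0) (c : 𝕜) (W : Matrix m m 𝕜)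
    {Xprev X Xnext Gprev G D Dnext : Matrix m k 𝕜}
    (hX : Xnext = ((1 - c * α) • (1 : Matrix m m 𝕜) + (c * α) • W) *
      ((2 : 𝕜) • X - Xprev - α • G + α • Gprev))
    (hD : D = α⁻¹ • (Xprev - X) - Gprev)
    (hDnext : Dnext = α⁻¹ • (X - Xnext) - G) :
    Dnext = D + c • ((1 - W) * (X - α • G - α • D)) ∧
      Xnext = X - α • G - α • Dnext := by
  rw [two_step_eq_of_eq_inv_smul_sub hα hD, mixing_mul_eq_sub] at hX
  have hDnext' : Dnext = D + c • ((1 - W) * (X - α • G - α • D)) := by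
    rw [hDnext, hX]
    match_scalars <;> field_simp <;> ring
  refine ⟨hDnext', ?_⟩
  rw [hX, hDnext']
  module

end FedCETStep

theorem fedcet_matrix_form_general
    {N n : ℕ}
    (g : Fin N → EuclideanSpace ℝ (Fin n) → EuclideanSpace ℝ (Fin n))
    (τ : ℕ) (α c : ℝ) (hα : 0 < α)
    (X D : ℤ → Matrix (Fin N) (Fin n) ℝ)
    (hX : ∀ t : ℤ, 0 ≤ t →
      X (t + 1) =
        ((1 - c * α) • (1 : Matrix (Fin N) (Fin N) ℝ)
            + (c * α) • (if (τ : ℤ) ∣ (t + 1) then Jmat N else 1)) *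
          ((2 : ℝ) • X t - X (t - 1) - α • gradF g (X t) + α • gradF g (X (t - 1))))
    (hD : ∀ t : ℤ, 0 ≤ t →
      D t = α⁻¹ • (X (t - 1) - X t) - gradF g (X (t - 1))) :
    ∀ t : ℤ, 0 ≤ t →
      D (t + 1) = D t
          + c • (((1 : Matrix (Fin N) (Fin N) ℝ)
              - (if (τ : ℤ) ∣ (t + 1) then Jmat N else 1)) *
            (X t - α • gradF g (X t) - α • D t)) ∧
      X (t + 1) = X t - α • gradF g (X t) - α • D (t + 1) := by
  intro t ht
  have hDnext := hD (t + 1) (by omega)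
  rw [add_sub_cancel_right] at hDnext
  exact fedcet_step hα.ne' c _ (hX t ht) (hD t ht) hDnext

/-- the two-step FedCET recursion on `X` (with companion variable `D`
defined by `D(t) = α⁻¹(X(t−1) − X(t)) − ∇F(X(t−1))`) is equivalent to the compact
matrix form of the iteration. -/
theorem fedcet_matrix_form
    {N n : ℕ} (hN : 1 ≤ N) (hn : 1 ≤ n)
    (L μ : ℝ) (hμ : 0 < μ) (hLμ : μ ≤ L)
    (f : Fin N → EuclideanSpace ℝ (Fin n) → ℝ)
    (g : Fin N → EuclideanSpace ℝ (Fin n) → EuclideanSpace ℝ (Fin n))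
    (hdiff : ∀ i, Differentiable ℝ (f i))
    (hgrad : ∀ i x, HasGradientAt (f i) (g i x) x)
    (hsmooth : ∀ i x y, ‖g i x - g i y‖ ≤ L * ‖x - y‖)
    (hsc : ∀ i x y, μ * ‖x - y‖ ^ 2 ≤ (inner ℝ (g i x - g i y) (x - y) : ℝ))
    (τ : ℕ) (hτ : 1 ≤ τ) (α c : ℝ) (hα : 0 < α) (hc : 0 < c)
    (X D : ℤ → Matrix (Fin N) (Fin n) ℝ)
    (hX : ∀ t : ℤ, 0 ≤ t →
      X (t + 1) =
        ((1 - c * α) • (1 : Matrix (Fin N) (Fin N) ℝ)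
            + (c * α) • (if (τ : ℤ) ∣ (t + 1) then Jmat N else 1)) *
          ((2 : ℝ) • X t - X (t - 1) - α • gradF g (X t) + α • gradF g (X (t - 1))))
    (hD : ∀ t : ℤ, 0 ≤ t →
      D t = α⁻¹ • (X (t - 1) - X t) - gradF g (X (t - 1))) :
    ∀ t : ℤ, 0 ≤ t →
      D (t + 1) = D t
          + c • (((1 : Matrix (Fin N) (Fin N) ℝ)
              - (if (τ : ℤ) ∣ (t + 1) then Jmat N else 1)) *
            (X t - α • gradF g (X t) - α • D t)) ∧
      X (t + 1) = X t - α • gradF g (X t) - α • D (t + 1) :=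
  fedcet_matrix_form_general g τ α c hα X D hX hD
end

section
/- Let D̂, X̂ ∈ ℝ^{N×n}. The following are equivalent: (a) for both choices W = I and W = J one has D̂ = D̂ + c(I − W)(X̂ − α∇F(X̂) − αD̂) and X̂ = X̂ − α∇F(X̂) − αD̂ (i.e. (D̂, X̂) is a fixed point of the FedCET iteration for every t); (b) D̂ + ∇F(X̂) = 0 and (I − J)X̂ = 0. -/
/-!
With `α ≠ 0` the primal equation says exactly that `D̂ + ∇F(X̂) = 0`, i.e. that the primal
update leaves `X̂` unchanged. Substituting `X̂` for the updated point, the dual equation with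
`c ≠ 0` becomes `(I − W)X̂ = 0`, which is vacuous for `W = I` and is consensus for `W = J`.
-/

open Matrix

section FixedPoint

variable {R M : Type*} [Semiring R] [IsCancelMulZero R] [AddCommGroup M] [Module R M]
  [Module.IsTorsionFree R M] {a : R} {x y z : M}

theorem sub_smul_sub_smul_eq_self_iff (ha : a ≠ 0) : x - a • y - a • z = x ↔ z + y = 0 := by
  rw [sub_sub, sub_eq_self, ← smul_add, smul_eq_zero_iff_right ha, add_comm]

theorem self_eq_add_smul_iff (ha : a ≠ 0) : x = x + a • y ↔ y = 0 := by
  rw [left_eq_add, smul_eq_zero_iff_right ha]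

end FixedPoint

theorem fedcet_fixed_point_iff_general
    {N n : ℕ}
    (g : Fin N → EuclideanSpace ℝ (Fin n) → EuclideanSpace ℝ (Fin n))
    (α c : ℝ) (hα : 0 < α) (hc : 0 < c)
    (Dhat Xhat : Matrix (Fin N) (Fin n) ℝ) :
    ((∀ W : Matrix (Fin N) (Fin N) ℝ, (W = 1 ∨ W = Jmat N) →
        Dhat = Dhat + c • (((1 : Matrix (Fin N) (Fin N) ℝ) - W) *
          (Xhat - α • gradF g Xhat - α • Dhat))) ∧
      Xhat = Xhat - α • gradF g Xhat - α • Dhat)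
    ↔ (Dhat + gradF g Xhat = 0 ∧
        ((1 : Matrix (Fin N) (Fin N) ℝ) - Jmat N) * Xhat = 0) := by
  have hprimal : Xhat - α • gradF g Xhat - α • Dhat = Xhat ↔ Dhat + gradF g Xhat = 0 :=
    sub_smul_sub_smul_eq_self_iff hα.ne'
  simp only [eq_comm (a := Xhat), hprimal, self_eq_add_smul_iff hc.ne']
  constructor
  · rintro ⟨hdual, hopt⟩
    refine ⟨hopt, ?_⟩
    simpa only [hprimal.mpr hopt] using hdual _ (Or.inr rfl)
  · rintro ⟨hopt, hconsensus⟩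
    refine ⟨?_, hopt⟩
    rintro W (rfl | rfl)
    · rw [sub_self, Matrix.zero_mul]
    · rwa [hprimal.mpr hopt]

/-- `(D̂, X̂)` is a fixed point of the FedCET iteration for both
`W = I` and `W = J` iff `D̂ + ∇F(X̂) = 0` and `(I − J)X̂ = 0`. -/
theorem fedcet_fixed_point_iff
    {N n : ℕ} (hN : 1 ≤ N) (hn : 1 ≤ n)
    (L μ : ℝ) (hμ : 0 < μ) (hLμ : μ ≤ L)
    (f : Fin N → EuclideanSpace ℝ (Fin n) → ℝ)
    (g : Fin N → EuclideanSpace ℝ (Fin n) → EuclideanSpace ℝ (Fin n))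
    (hdiff : ∀ i, Differentiable ℝ (f i))
    (hgrad : ∀ i x, HasGradientAt (f i) (g i x) x)
    (hsmooth : ∀ i x y, ‖g i x - g i y‖ ≤ L * ‖x - y‖)
    (hsc : ∀ i x y, μ * ‖x - y‖ ^ 2 ≤ (inner ℝ (g i x - g i y) (x - y) : ℝ))
    (α c : ℝ) (hα : 0 < α) (hc : 0 < c)
    (Dhat Xhat : Matrix (Fin N) (Fin n) ℝ) :
    ((∀ W : Matrix (Fin N) (Fin N) ℝ, (W = 1 ∨ W = Jmat N) →
        Dhat = Dhat + c • (((1 : Matrix (Fin N) (Fin N) ℝ) - W) *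
          (Xhat - α • gradF g Xhat - α • Dhat))) ∧
      Xhat = Xhat - α • gradF g Xhat - α • Dhat)
    ↔ (Dhat + gradF g Xhat = 0 ∧
        ((1 : Matrix (Fin N) (Fin N) ℝ) - Jmat N) * Xhat = 0) :=
  fedcet_fixed_point_iff_general g α c hα hc Dhat Xhat
end

section
/- Let X̂ ∈ ℝ^{N×n} satisfy (I − J)X̂ = 0, so that all rows of X̂ equal a common vector x̂ ∈ ℝ^n. Then x̂ is the (unique) minimizer x̄* of f if and only if there exists P ∈ ℝ^{N×n} such that (I − J)P + ∇F(X̂) = 0. -/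
/-! The range of `I − J` is exactly the set of matrices whose columns sum to zero: `1ᵀ(I − J) = 0`,
and a matrix `G` with zero column sums satisfies `JG = 0`, so `G = (I − J)G`. At a consensus point
the rows of `∇F(X̂)` are the `∇fᵢ(x̂)`, so the existence of `P` says `∑ᵢ ∇fᵢ(x̂) = 0`. Strong
convexity makes the gradient of `∑ᵢ fᵢ` monotone, and the mean value theorem along a segment turns
monotonicity into the first-order bound `f y ≥ f x̂ + ⟪∇f x̂, y − x̂⟫`; hence `x̂` minimizes `f`
exactly when the gradient vanishes there. -/

open Matrix
set_option linter.unusedVariables false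

open scoped RealInnerProductSpace

section Gradient

variable {E : Type*} [NormedAddCommGroup E] [InnerProductSpace ℝ E] [CompleteSpace E]

theorem HasGradientAt.sum {ι : Type*} (s : Finset ι) {f : ι → E → ℝ} {f' : ι → E} {x : E}
    (h : ∀ i ∈ s, HasGradientAt (f i) (f' i) x) :
    HasGradientAt (fun y => ∑ i ∈ s, f i y) (∑ i ∈ s, f' i) x := by
  rw [hasGradientAt_iff_hasFDerivAt, map_sum]
  exact HasFDerivAt.fun_sum fun i hi => (h i hi).hasFDerivAt

theorem HasGradientAt.hasDerivAt_comp_add_smul {f : E → ℝ} {f' x v : E} {t : ℝ}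
    (h : HasGradientAt f f' (x + t • v)) :
    HasDerivAt (fun s : ℝ => f (x + s • v)) ⟪f', v⟫ t := by
  have hline : HasDerivAt (fun s : ℝ => x + s • v) v t := by
    simpa using ((hasDerivAt_id t).smul_const v).const_add x
  have := h.hasFDerivAt.comp_hasDerivAt t hline
  rw [InnerProductSpace.toDual_apply_apply] at this
  exact this

variable {f : E → ℝ} {f' : E → E}

theorem add_inner_sub_le_of_monotone_gradient (hf : ∀ x, HasGradientAt f (f' x) x)
    (hmono : ∀ x y, 0 ≤ ⟪f' x - f' y, x - y⟫) (x y : E) :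
    f x + ⟪f' x, y - x⟫ ≤ f y := by
  set v := y - x
  have hline : ∀ t : ℝ, HasDerivAt (fun s : ℝ => f (x + s • v)) ⟪f' (x + t • v), v⟫ t :=
    fun t => (hf _).hasDerivAt_comp_add_smul
  obtain ⟨c, hc, hslope⟩ := exists_hasDerivAt_eq_slope _ _ zero_lt_one
    (continuous_iff_continuousAt.2 fun t => (hline t).continuousAt).continuousOn
    fun t _ => hline t
  have hderiv_mono : ⟪f' x, v⟫ ≤ ⟪f' (x + c • v), v⟫ := by
    have hcv := hmono (x + c • v) x
    rw [add_sub_cancel_left, inner_smul_right, inner_sub_left] at hcv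
    nlinarith [hc.1]
  have hxy : x + (1 : ℝ) • v = y := by simp [v]
  simp only [hxy, zero_smul, add_zero, sub_zero, div_one] at hslope
  linarith

theorem isMinOn_univ_iff_eq_zero_of_monotone_gradient (hf : ∀ x, HasGradientAt f (f' x) x)
    (hmono : ∀ x y, 0 ≤ ⟪f' x - f' y, x - y⟫) (x : E) :
    IsMinOn f Set.univ x ↔ f' x = 0 := by
  constructor
  · intro hmin
    have := (hmin.isLocalMin Filter.univ_mem).hasFDerivAt_eq_zero (hf x).hasFDerivAt
    simpa using this
  · intro hzero y _
    simpa [hzero] using add_inner_sub_le_of_monotone_gradient hf hmono x y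

end Gradient

section Averaging

variable {N : ℕ} {m : Type*}

theorem Jmat_mul_apply (G : Matrix (Fin N) m ℝ) (i : Fin N) (k : m) :
    (Jmat N * G) i k = (N : ℝ)⁻¹ * ∑ j, G j k := by
  simp [Jmat, Matrix.mul_apply, Finset.mul_sum]

theorem vecMul_one_sub_Jmat : (1 : Fin N → ℝ) ᵥ* (1 - Jmat N) = 0 := by
  ext j
  have : (N : ℝ) ≠ 0 := by have := j.pos; positivity
  simp [Matrix.vecMul, dotProduct, Jmat, Matrix.one_apply, Finset.sum_sub_distrib, this]

theorem exists_one_sub_Jmat_mul_add_eq_zero_iff (G : Matrix (Fin N) m ℝ) :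
    (∃ P : Matrix (Fin N) m ℝ, (1 - Jmat N) * P + G = 0) ↔ (1 : Fin N → ℝ) ᵥ* G = 0 := by
  constructor
  · rintro ⟨P, hP⟩
    have := congrArg ((1 : Fin N → ℝ) ᵥ* ·) hP
    simpa [Matrix.vecMul_add, ← Matrix.vecMul_vecMul, vecMul_one_sub_Jmat] using this
  · intro hG
    refine ⟨-G, ?_⟩
    ext i k
    have hk : ∑ j, G j k = 0 := by simpa [Matrix.vecMul, dotProduct] using congrFun hG k
    simp [Matrix.sub_mul, Jmat_mul_apply, hk]

end Averaging

theorem one_vecMul_gradF_of_row_eq {N n : ℕ}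
    (g : Fin N → EuclideanSpace ℝ (Fin n) → EuclideanSpace ℝ (Fin n))
    {X : Matrix (Fin N) (Fin n) ℝ} {x : EuclideanSpace ℝ (Fin n)}
    (hrow : ∀ i, X i = WithLp.equiv 2 (Fin n → ℝ) x) :
    (1 : Fin N → ℝ) ᵥ* gradF g X = (∑ i, g i x).ofLp := by
  ext k
  simp [Matrix.vecMul, dotProduct, gradF, hrow]

theorem consensus_optimal_iff_exists_P_general
    {N n : ℕ} (hN : 1 ≤ N)
    (μ : ℝ) (hμ : 0 < μ)
    (f : Fin N → EuclideanSpace ℝ (Fin n) → ℝ)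
    (g : Fin N → EuclideanSpace ℝ (Fin n) → EuclideanSpace ℝ (Fin n))
    (hgrad : ∀ i x, HasGradientAt (f i) (g i x) x)
    (hsc : ∀ i x y, μ * ‖x - y‖ ^ 2 ≤ (inner ℝ (g i x - g i y) (x - y) : ℝ))
    (Xhat : Matrix (Fin N) (Fin n) ℝ)
    (xhat : EuclideanSpace ℝ (Fin n))
    (hrow : ∀ i : Fin N, Xhat i = (WithLp.equiv 2 (Fin n → ℝ)) xhat) :
    (∀ y : EuclideanSpace ℝ (Fin n),
        (N : ℝ)⁻¹ * ∑ i : Fin N, f i xhat ≤ (N : ℝ)⁻¹ * ∑ i : Fin N, f i y)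
    ↔ (∃ P : Matrix (Fin N) (Fin n) ℝ,
        ((1 : Matrix (Fin N) (Fin N) ℝ) - Jmat N) * P + gradF g Xhat = 0) := by
  have hsum_mono : ∀ x y, 0 ≤ ⟪∑ i, g i x - ∑ i, g i y, x - y⟫ := by
    intro x y
    rw [← Finset.sum_sub_distrib, sum_inner]
    exact Finset.sum_nonneg fun i _ => (mul_nonneg hμ.le (sq_nonneg _)).trans (hsc i x y)
  have hmin := isMinOn_univ_iff_eq_zero_of_monotone_gradient
    (fun x => HasGradientAt.sum Finset.univ fun i _ => hgrad i x) hsum_mono xhat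
  have hNinv : (0 : ℝ) < (N : ℝ)⁻¹ := by positivity
  simp_rw [mul_le_mul_iff_right₀ hNinv]
  rw [isMinOn_univ_iff] at hmin
  rw [exists_one_sub_Jmat_mul_add_eq_zero_iff, one_vecMul_gradF_of_row_eq g hrow,
    WithLp.ofLp_eq_zero]
  exact hmin

/-- if all rows of `X̂` equal a common vector `x̂`, then `x̂` minimizes the
global loss `f = (1/N)∑ f_i` iff there exists `P` with `(I − J)P + ∇F(X̂) = 0`. -/
theorem consensus_optimal_iff_exists_P
    {N n : ℕ} (hN : 1 ≤ N) (hn : 1 ≤ n)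
    (L μ : ℝ) (hμ : 0 < μ) (hLμ : μ ≤ L)
    (f : Fin N → EuclideanSpace ℝ (Fin n) → ℝ)
    (g : Fin N → EuclideanSpace ℝ (Fin n) → EuclideanSpace ℝ (Fin n))
    (hdiff : ∀ i, Differentiable ℝ (f i))
    (hgrad : ∀ i x, HasGradientAt (f i) (g i x) x)
    (hsmooth : ∀ i x y, ‖g i x - g i y‖ ≤ L * ‖x - y‖)
    (hsc : ∀ i x y, μ * ‖x - y‖ ^ 2 ≤ (inner ℝ (g i x - g i y) (x - y) : ℝ))
    (Xhat : Matrix (Fin N) (Fin n) ℝ)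
    (hconsensus : ((1 : Matrix (Fin N) (Fin N) ℝ) - Jmat N) * Xhat = 0)
    (xhat : EuclideanSpace ℝ (Fin n))
    (hrow : ∀ i : Fin N, Xhat i = (WithLp.equiv 2 (Fin n → ℝ)) xhat) :
    (∀ y : EuclideanSpace ℝ (Fin n),
        (N : ℝ)⁻¹ * ∑ i : Fin N, f i xhat ≤ (N : ℝ)⁻¹ * ∑ i : Fin N, f i y)
    ↔ (∃ P : Matrix (Fin N) (Fin n) ℝ,
        ((1 : Matrix (Fin N) (Fin N) ℝ) - Jmat N) * P + gradF g Xhat = 0) :=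
  consensus_optimal_iff_exists_P_general hN μ hμ f g hgrad hsc Xhat xhat hrow
end

section
/- Assume ταL ≤ 2. Then for every integer k ≥ 0, with B₁ = τ³(1 + 2/τ)^{2τ−2}: (1/(τα))‖A(k) + B(k)‖² ≤ 2ατ‖D(τk+τ) − D(τk)‖² + B₁L⁴α³‖X(τk) − X*‖² + B₁L²α³‖D(τk) − D*‖², where A(k) = (τ−1)α∇F(X(τk)) − α∑_{h=1}^{τ−1}∇F(X(τk + h)) and B(k) = (τ−1)α(D(τk + τ) − D(τk)). -/
/-! Within a period the averaging step is the identity, so `D` stays at `D(τk)` and the local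
iterates are gradient steps with a constant correction. Since `∇F(X*) + D* = 0`, one step moves `X`
by at most `α (L ‖X(τk+h) - X(τk)‖ + M)` with `M = L ‖X(τk) - X*‖ + ‖D(τk) - D*‖`, and a discrete
Grönwall argument gives `L ‖X(τk+h) - X(τk)‖ ≤ h αL (1 + αL)^h M ≤ h αL (1 + 2/τ)^(τ-1) M`.
Writing `A(k) = α ∑_{h<τ} (∇F(X(τk)) - ∇F(X(τk+h)))`, the triangle inequality together with
`∑_{h<τ} h = τ(τ-1)/2` bounds `‖A(k) + B(k)‖`, and `(p + q)² ≤ 2p² + 2q²` gives the claim. -/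

open Matrix
set_option linter.unusedVariables false

/-- Squared weighted norm `‖A‖_Q² = tr(AᵀQA)`. -/
noncomputable def nsqQ {N n : ℕ} (Q : Matrix (Fin N) (Fin N) ℝ)
    (A : Matrix (Fin N) (Fin n) ℝ) : ℝ :=
  Matrix.trace (Aᵀ * Q * A)

/-- Squared Frobenius norm `‖A‖² = tr(AᵀA)`. -/
noncomputable def frobSq {N n : ℕ} (A : Matrix (Fin N) (Fin n) ℝ) : ℝ :=
  Matrix.trace (Aᵀ * A)

open Finset
attribute [local instance] Matrix.frobeniusNormedAddCommGroup Matrix.frobeniusNormedSpace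

theorem Matrix.frobenius_norm_sq_eq_sum_norm_row_sq {m p : Type*} [Fintype m] [Fintype p]
    (A : Matrix m p ℝ) : ‖A‖ ^ 2 = ∑ i, ‖WithLp.toLp 2 (A i)‖ ^ 2 := by
  change ‖WithLp.toLp 2 fun i => WithLp.toLp 2 (A i)‖ ^ 2 = _
  exact PiLp.norm_sq_eq_of_L2 _ _

theorem frobSq_eq_norm_sq {N n : ℕ} (A : Matrix (Fin N) (Fin n) ℝ) : frobSq A = ‖A‖ ^ 2 := by
  rw [Matrix.frobenius_norm_sq_eq_sum_norm_row_sq, frobSq, Matrix.trace]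
  simp only [Matrix.diag_apply, Matrix.mul_apply, Matrix.transpose_apply,
    EuclideanSpace.norm_sq_eq]
  rw [sum_comm]
  simp [sq]

theorem norm_gradF_sub_le {N n : ℕ} {L : ℝ} (hL : 0 ≤ L)
    {g : Fin N → EuclideanSpace ℝ (Fin n) → EuclideanSpace ℝ (Fin n)}
    (hg : ∀ i x y, ‖g i x - g i y‖ ≤ L * ‖x - y‖) (X Y : Matrix (Fin N) (Fin n) ℝ) :
    ‖gradF g X - gradF g Y‖ ≤ L * ‖X - Y‖ := by
  refine le_of_sq_le_sq ?_ (by positivity)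
  rw [mul_pow, Matrix.frobenius_norm_sq_eq_sum_norm_row_sq,
    Matrix.frobenius_norm_sq_eq_sum_norm_row_sq, mul_sum]
  refine sum_le_sum fun i _ => ?_
  rw [← mul_pow]
  exact pow_le_pow_left₀ (norm_nonneg _) (hg i _ _) 2

theorem le_of_discrete_gronwall {u : ℕ → ℝ} {x M : ℝ} {T : ℕ} (hx : 0 ≤ x) (hM : 0 ≤ M)
    (h0 : u 0 ≤ 0) (hstep : ∀ h, h + 1 < T → u (h + 1) ≤ (1 + x) * u h + x * M) :
    ∀ h < T, u h ≤ h * x * (1 + x) ^ h * M := by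
  intro h
  induction h with
  | zero => exact fun _ => by simpa using h0
  | succ h ih =>
    intro hh
    have hpow : 1 ≤ (1 + x) ^ (h + 1) := one_le_pow₀ (by linarith)
    calc u (h + 1) ≤ (1 + x) * u h + x * M := hstep h hh
      _ ≤ (1 + x) * (h * x * (1 + x) ^ h * M) + x * (1 + x) ^ (h + 1) * M := by
        gcongr
        · exact ih (by omega)
        · exact le_mul_of_one_le_right hx hpow
      _ = (h + 1 : ℕ) * x * (1 + x) ^ (h + 1) * M := by push_cast; ring

theorem smul_sub_smul_sum_Icc_eq {E : Type*} [AddCommGroup E] [Module ℝ E] (a : ℝ) (w : ℕ → E)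
    {τ : ℕ} (hτ : 1 ≤ τ) :
    (((τ : ℝ) - 1) * a) • w 0 - a • ∑ h ∈ Icc 1 (τ - 1), w h
      = a • ∑ h ∈ range τ, (w 0 - w h) := by
  obtain ⟨m, rfl⟩ : ∃ m, τ = m + 1 := ⟨τ - 1, by omega⟩
  rw [sum_range_succ', Nat.add_sub_cancel, ← Ico_add_one_right_eq_Icc,
    sum_Ico_eq_sum_range, sum_sub_distrib, sum_const, card_range]
  simp only [Nat.add_sub_cancel, add_comm 1, sub_self, add_zero, Nat.cast_add, Nat.cast_one,
    add_sub_cancel_right]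
  rw [← Nat.cast_smul_eq_nsmul ℝ]
  module

theorem sum_range_natCast_eq (m : ℕ) : ∑ h ∈ range m, (h : ℝ) = m * (m - 1) / 2 := by
  induction m with
  | zero => simp
  | succ m ih => rw [sum_range_succ, ih]; push_cast; ring

def IsFedCETTrajectory {N n : ℕ}
    (g : Fin N → EuclideanSpace ℝ (Fin n) → EuclideanSpace ℝ (Fin n))
    (τ : ℕ) (α c : ℝ) (X D : ℕ → Matrix (Fin N) (Fin n) ℝ) : Prop :=
  ∀ t : ℕ,
    D (t + 1) = D t
        + c • (((1 : Matrix (Fin N) (Fin N) ℝ)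
            - (if τ ∣ (t + 1) then Jmat N else 1)) *
          (X t - α • gradF g (X t) - α • D t)) ∧
    X (t + 1) = X t - α • gradF g (X t) - α • D (t + 1)

namespace IsFedCETTrajectory

variable {N n : ℕ} {g : Fin N → EuclideanSpace ℝ (Fin n) → EuclideanSpace ℝ (Fin n)}
  {τ : ℕ} {α c : ℝ} {X D : ℕ → Matrix (Fin N) (Fin n) ℝ}

theorem D_add_eq_of_lt (hF : IsFedCETTrajectory g τ α c X D) (k : ℕ) {h : ℕ} (hh : h < τ) :
    D (τ * k + h) = D (τ * k) := by
  induction h with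
  | zero => rfl
  | succ h ih =>
    have hndvd : ¬ τ ∣ τ * k + h + 1 := by
      rw [add_assoc, Nat.dvd_add_right (dvd_mul_right τ k)]
      exact Nat.not_dvd_of_pos_of_lt h.succ_pos hh
    rw [← add_assoc, (hF _).1, if_neg hndvd, sub_self, Matrix.zero_mul, smul_zero, add_zero,
      ih (by omega)]

theorem X_add_succ_eq (hF : IsFedCETTrajectory g τ α c X D) (k : ℕ) {h : ℕ} (hh : h + 1 < τ) :
    X (τ * k + h + 1) = X (τ * k + h) - α • (gradF g (X (τ * k + h)) + D (τ * k)) := by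
  rw [(hF _).2, add_assoc, hF.D_add_eq_of_lt k hh, smul_add, sub_sub]

theorem mul_norm_X_add_sub_le (hF : IsFedCETTrajectory g τ α c X D) {L : ℝ} (hL : 0 ≤ L)
    (hα : 0 ≤ α) (hg : ∀ i x y, ‖g i x - g i y‖ ≤ L * ‖x - y‖) (Xstar : Matrix (Fin N) (Fin n) ℝ)
    (k : ℕ) {h : ℕ} (hh : h < τ) :
    L * ‖X (τ * k + h) - X (τ * k)‖
      ≤ h * (α * L) * (1 + α * L) ^ h
          * (L * ‖X (τ * k) - Xstar‖ + ‖D (τ * k) + gradF g Xstar‖) := by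
  set M := L * ‖X (τ * k) - Xstar‖ + ‖D (τ * k) + gradF g Xstar‖
  refine le_of_discrete_gronwall (u := fun h => L * ‖X (τ * k + h) - X (τ * k)‖)
    (by positivity) (by positivity) (by simp) (fun h hh => ?_) h hh
  set Y := X (τ * k + h)
  have hdir : ‖gradF g Y + D (τ * k)‖ ≤ L * ‖Y - X (τ * k)‖ + M := by
    calc ‖gradF g Y + D (τ * k)‖
        ≤ ‖gradF g Y - gradF g Xstar‖ + ‖D (τ * k) + gradF g Xstar‖ := by
          rw [show gradF g Y + D (τ * k)
            = (gradF g Y - gradF g Xstar) + (D (τ * k) + gradF g Xstar) by abel]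
          exact norm_add_le _ _
      _ ≤ L * (‖Y - X (τ * k)‖ + ‖X (τ * k) - Xstar‖) + ‖D (τ * k) + gradF g Xstar‖ := by
          gcongr
          exact (norm_gradF_sub_le hL hg _ _).trans
            (mul_le_mul_of_nonneg_left (norm_sub_le_norm_sub_add_norm_sub _ _ _) hL)
      _ = L * ‖Y - X (τ * k)‖ + M := by ring
  calc L * ‖X (τ * k + (h + 1)) - X (τ * k)‖
      = L * ‖(Y - X (τ * k)) - α • (gradF g Y + D (τ * k))‖ := by
        rw [← add_assoc, hF.X_add_succ_eq k hh, sub_right_comm]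
    _ ≤ L * (‖Y - X (τ * k)‖ + α * (L * ‖Y - X (τ * k)‖ + M)) := by
        gcongr
        refine (norm_sub_le _ _).trans ?_
        rw [norm_smul, Real.norm_of_nonneg hα]
        gcongr
    _ = (1 + α * L) * (L * ‖Y - X (τ * k)‖) + α * L * M := by ring

theorem sum_norm_gradF_sub_le (hF : IsFedCETTrajectory g τ α c X D) {L : ℝ} (hL : 0 ≤ L)
    (hα : 0 ≤ α) (hαL : α * L ≤ 2 / τ) (hg : ∀ i x y, ‖g i x - g i y‖ ≤ L * ‖x - y‖)
    (Xstar : Matrix (Fin N) (Fin n) ℝ) (k : ℕ) :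
    ∑ h ∈ range τ, ‖gradF g (X (τ * k)) - gradF g (X (τ * k + h))‖
      ≤ τ * (τ - 1) / 2 * (α * L) * (1 + 2 / (τ : ℝ)) ^ (τ - 1)
          * (L * ‖X (τ * k) - Xstar‖ + ‖D (τ * k) + gradF g Xstar‖) := by
  set M := L * ‖X (τ * k) - Xstar‖ + ‖D (τ * k) + gradF g Xstar‖
  set P := (1 + 2 / (τ : ℝ)) ^ (τ - 1)
  have hterm : ∀ h ∈ range τ,
      ‖gradF g (X (τ * k)) - gradF g (X (τ * k + h))‖ ≤ h * (α * L * P * M) := by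
    intro h hh
    have hP : (1 + α * L) ^ h ≤ P :=
      (pow_le_pow_left₀ (by positivity) (by linarith) h).trans
        (pow_le_pow_right₀ (by linarith [show (0 : ℝ) ≤ 2 / τ by positivity])
          (by rw [mem_range] at hh; omega))
    calc ‖gradF g (X (τ * k)) - gradF g (X (τ * k + h))‖
        ≤ L * ‖X (τ * k + h) - X (τ * k)‖ := by
          rw [norm_sub_rev (X _)]; exact norm_gradF_sub_le hL hg _ _
      _ ≤ h * (α * L) * (1 + α * L) ^ h * M :=
          hF.mul_norm_X_add_sub_le hL hα hg Xstar k (mem_range.mp hh)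
      _ ≤ h * (α * L) * P * M := by gcongr
      _ = h * (α * L * P * M) := by ring
  exact (sum_le_sum hterm).trans_eq (by rw [← sum_mul, sum_range_natCast_eq]; ring)

end IsFedCETTrajectory

theorem fedcet_AB_bound_of_norm_le {τ α L a b d S Z P : ℝ} (hτ : 1 ≤ τ) (hα : 0 < α) (hL : 0 ≤ L)
    (ha : 0 ≤ a) (hb : 0 ≤ b) (hP : 0 ≤ P) (hS0 : 0 ≤ S)
    (hS : S ≤ τ * (τ - 1) / 2 * (α * L) * P * (L * a + b)) (hZ0 : 0 ≤ Z)
    (hZ : Z ≤ α * S + (τ - 1) * α * d) :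
    (τ * α)⁻¹ * Z ^ 2
      ≤ 2 * α * τ * d ^ 2 + τ ^ 3 * P ^ 2 * L ^ 4 * α ^ 3 * a ^ 2
        + τ ^ 3 * P ^ 2 * L ^ 2 * α ^ 3 * b ^ 2 := by
  rw [inv_mul_le_iff₀ (by positivity)]
  have hS2 : S ^ 2 ≤ (τ * (τ - 1) / 2 * (α * L) * P) ^ 2 * (2 * (L ^ 2 * a ^ 2 + b ^ 2)) := by
    refine (pow_le_pow_left₀ hS0 hS 2).trans ?_
    rw [mul_pow]
    gcongr
    nlinarith [sq_nonneg (L * a - b)]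
  have hτ2 : (τ - 1) ^ 2 ≤ τ ^ 2 := by nlinarith
  calc Z ^ 2 ≤ 2 * α ^ 2 * S ^ 2 + 2 * α ^ 2 * (τ - 1) ^ 2 * d ^ 2 := by
        nlinarith [pow_le_pow_left₀ hZ0 hZ 2, sq_nonneg (α * S - (τ - 1) * α * d)]
    _ ≤ τ ^ 2 * (τ - 1) ^ 2 * α ^ 4 * L ^ 2 * P ^ 2 * (L ^ 2 * a ^ 2 + b ^ 2)
          + 2 * α ^ 2 * τ ^ 2 * d ^ 2 := by
        nlinarith [mul_le_mul_of_nonneg_left hS2 (by positivity : (0 : ℝ) ≤ 2 * α ^ 2),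
          mul_le_mul_of_nonneg_left hτ2 (by positivity : (0 : ℝ) ≤ 2 * α ^ 2 * d ^ 2)]
    _ ≤ τ ^ 2 * τ ^ 2 * α ^ 4 * L ^ 2 * P ^ 2 * (L ^ 2 * a ^ 2 + b ^ 2)
          + 2 * α ^ 2 * τ ^ 2 * d ^ 2 := by gcongr
    _ = _ := by ring

theorem fedcet_AB_bound_general
    {N n : ℕ}
    (L μ : ℝ) (hμ : 0 < μ) (hLμ : μ ≤ L)
    (g : Fin N → EuclideanSpace ℝ (Fin n) → EuclideanSpace ℝ (Fin n))
    (hsmooth : ∀ i x y, ‖g i x - g i y‖ ≤ L * ‖x - y‖)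
    (τ : ℕ) (hτ : 1 ≤ τ) (α c : ℝ) (hα : 0 < α)
    (hταL : (τ : ℝ) * α * L ≤ 2)
    (X D : ℕ → Matrix (Fin N) (Fin n) ℝ)
    (hiter : ∀ t : ℕ,
      D (t + 1) = D t
          + c • (((1 : Matrix (Fin N) (Fin N) ℝ)
              - (if τ ∣ (t + 1) then Jmat N else 1)) *
            (X t - α • gradF g (X t) - α • D t)) ∧
      X (t + 1) = X t - α • gradF g (X t) - α • D (t + 1))
    (Xstar : Matrix (Fin N) (Fin n) ℝ)
    (Dstar : Matrix (Fin N) (Fin n) ℝ) (hDstar : Dstar = - gradF g Xstar) :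
    ∀ k : ℕ,
      ((τ : ℝ) * α)⁻¹ * frobSq
          (((((τ : ℝ) - 1) * α) • gradF g (X (τ * k))
              - α • (∑ h ∈ Finset.Icc 1 (τ - 1), gradF g (X (τ * k + h))))
            + (((τ : ℝ) - 1) * α) • (D (τ * k + τ) - D (τ * k)))
      ≤ 2 * α * (τ : ℝ) * frobSq (D (τ * k + τ) - D (τ * k))
        + ((τ : ℝ) ^ 3 * (1 + 2 / (τ : ℝ)) ^ (2 * τ - 2)) * L ^ 4 * α ^ 3
            * frobSq (X (τ * k) - Xstar)
        + ((τ : ℝ) ^ 3 * (1 + 2 / (τ : ℝ)) ^ (2 * τ - 2)) * L ^ 2 * α ^ 3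
            * frobSq (D (τ * k) - Dstar) := by
  intro k
  subst hDstar
  have hL : 0 ≤ L := hμ.le.trans hLμ
  have hτR : (1 : ℝ) ≤ τ := by exact_mod_cast hτ
  have hαL : α * L ≤ 2 / τ := by rw [le_div_iff₀ (by positivity)]; linarith
  have hS := IsFedCETTrajectory.sum_norm_gradF_sub_le hiter hL hα.le hαL hsmooth Xstar k
  have hA := smul_sub_smul_sum_Icc_eq α (fun h => gradF g (X (τ * k + h))) hτ
  simp only [add_zero] at hA
  rw [frobSq_eq_norm_sq, frobSq_eq_norm_sq, frobSq_eq_norm_sq, frobSq_eq_norm_sq,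
    show 2 * τ - 2 = (τ - 1) * 2 by omega, pow_mul, hA, sub_neg_eq_add]
  refine fedcet_AB_bound_of_norm_le hτR hα hL (norm_nonneg _) (norm_nonneg _) (by positivity)
    (sum_nonneg fun _ _ => norm_nonneg _) hS (norm_nonneg _) ?_
  refine (norm_add_le _ _).trans ?_
  rw [norm_smul, norm_smul, Real.norm_of_nonneg hα.le,
    Real.norm_of_nonneg (by nlinarith)]
  gcongr
  exact norm_sum_le _ _

/-- Lemma 3: bound on `(1/(τα))‖A(k) + B(k)‖²` with
`B₁ = τ³(1 + 2/τ)^{2τ−2}`. -/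
theorem fedcet_AB_bound
    {N n : ℕ} (hN : 1 ≤ N) (hn : 1 ≤ n)
    (L μ : ℝ) (hμ : 0 < μ) (hLμ : μ ≤ L)
    (f : Fin N → EuclideanSpace ℝ (Fin n) → ℝ)
    (g : Fin N → EuclideanSpace ℝ (Fin n) → EuclideanSpace ℝ (Fin n))
    (hdiff : ∀ i, Differentiable ℝ (f i))
    (hgrad : ∀ i x, HasGradientAt (f i) (g i x) x)
    (hsmooth : ∀ i x y, ‖g i x - g i y‖ ≤ L * ‖x - y‖)
    (hsc : ∀ i x y, μ * ‖x - y‖ ^ 2 ≤ (inner ℝ (g i x - g i y) (x - y) : ℝ))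
    (τ : ℕ) (hτ : 1 ≤ τ) (α c : ℝ) (hα : 0 < α) (hc : 0 < c)
    (hταL : (τ : ℝ) * α * L ≤ 2)
    (X D : ℕ → Matrix (Fin N) (Fin n) ℝ)
    (hiter : ∀ t : ℕ,
      D (t + 1) = D t
          + c • (((1 : Matrix (Fin N) (Fin N) ℝ)
              - (if τ ∣ (t + 1) then Jmat N else 1)) *
            (X t - α • gradF g (X t) - α • D t)) ∧
      X (t + 1) = X t - α • gradF g (X t) - α • D (t + 1))
    (xstar : EuclideanSpace ℝ (Fin n))
    (hxstar : ∀ y : EuclideanSpace ℝ (Fin n),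
      (N : ℝ)⁻¹ * ∑ i : Fin N, f i xstar ≤ (N : ℝ)⁻¹ * ∑ i : Fin N, f i y)
    (Xstar : Matrix (Fin N) (Fin n) ℝ)
    (hXstar : ∀ i : Fin N, Xstar i = (WithLp.equiv 2 (Fin n → ℝ)) xstar)
    (Dstar : Matrix (Fin N) (Fin n) ℝ) (hDstar : Dstar = - gradF g Xstar) :
    ∀ k : ℕ,
      ((τ : ℝ) * α)⁻¹ * frobSq
          (((((τ : ℝ) - 1) * α) • gradF g (X (τ * k))
              - α • (∑ h ∈ Finset.Icc 1 (τ - 1), gradF g (X (τ * k + h))))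
            + (((τ : ℝ) - 1) * α) • (D (τ * k + τ) - D (τ * k)))
      ≤ 2 * α * (τ : ℝ) * frobSq (D (τ * k + τ) - D (τ * k))
        + ((τ : ℝ) ^ 3 * (1 + 2 / (τ : ℝ)) ^ (2 * τ - 2)) * L ^ 4 * α ^ 3
            * frobSq (X (τ * k) - Xstar)
        + ((τ : ℝ) ^ 3 * (1 + 2 / (τ : ℝ)) ^ (2 * τ - 2)) * L ^ 2 * α ^ 3
            * frobSq (D (τ * k) - Dstar) :=
  fedcet_AB_bound_general L μ hμ hLμ g hsmooth τ hτ α c hα hταL X D hiter Xstar Dstar hDstar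
end

section
/- Let τ ≥ 1 be an integer and let 0 < μ ≤ L be reals. If 0 < α < min{ 1/(2τL), μ²/(2τ(1 + 2/τ)^{2τ−2}L³), μ/(5τ(1 + 2/τ)^{2τ−2}L²) }, then both strict learning-rate inequalities hold: 1 − τμα + τL²(τα − 2/μ)(1 + 2/τ)^{2τ−2}α > 0 and (1 − τLα)τμα + τ³L⁴(τα − 2/μ)(1 + 2/τ)^{2τ−2}α³ > 0. -/
/-!
Of the power `c = (1 + 2/τ)^(2τ-2)` only `c ≥ 0` matters. In the first inequality drop the
nonnegative term `τ²L²cα²` and bound the two negative ones by `τμα ≤ τLα < 1/2` and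
`2τL²cα/μ < 2/5`. In the second, factor out `τα`: then `τLαμ < μ/2`, and the product of the
first two thresholds gives `4τ²cL⁴α² < μ²`, i.e. `2τ²L⁴cα²/μ < μ/2`.
-/

section RateConditions

variable {T c μ L α : ℝ}

theorem first_rate_condition_pos (hT : 0 ≤ T) (hc : 0 ≤ c) (hμ : 0 < μ) (hLμ : μ ≤ L)
    (hα : 0 ≤ α) (h1 : 2 * T * L * α < 1) (h3 : 5 * T * c * L ^ 2 * α < μ) :
    0 < 1 - T * μ * α + T * L ^ 2 * (T * α - 2 / μ) * c * α := by
  have hμα : T * μ * α < 1 / 2 := by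
    have : T * μ * α ≤ T * L * α := by gcongr
    linarith
  have hLc : 2 * T * L ^ 2 * c * α / μ < 2 / 5 := by
    rw [div_lt_iff₀ hμ]
    linarith
  have hsq : 0 ≤ T ^ 2 * L ^ 2 * c * α ^ 2 := by positivity
  have hexpand : 1 - T * μ * α + T * L ^ 2 * (T * α - 2 / μ) * c * α
      = 1 - T * μ * α + T ^ 2 * L ^ 2 * c * α ^ 2 - 2 * T * L ^ 2 * c * α / μ := by ring
  rw [hexpand]
  linarith

theorem second_rate_condition_pos (hT : 0 < T) (hc : 0 ≤ c) (hμ : 0 < μ) (hL : 0 ≤ L)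
    (hα : 0 < α) (h1 : 2 * T * L * α < 1) (h2 : 2 * T * c * L ^ 3 * α < μ ^ 2) :
    0 < (1 - T * L * α) * T * μ * α + T ^ 3 * L ^ 4 * (T * α - 2 / μ) * c * α ^ 3 := by
  have hlin : T * L * α * μ < μ / 2 := by nlinarith
  have hquad : 2 * T ^ 2 * L ^ 4 * c * α ^ 2 / μ < μ / 2 := by
    have hprod : (2 * T * L * α) * (2 * T * c * L ^ 3 * α) < 1 * μ ^ 2 :=
      mul_lt_mul'' h1 h2 (by positivity) (by positivity)
    rw [div_lt_iff₀ hμ]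
    nlinarith
  have hfactor : (1 - T * L * α) * T * μ * α + T ^ 3 * L ^ 4 * (T * α - 2 / μ) * c * α ^ 3
      = T * α * (μ - T * L * α * μ - 2 * T ^ 2 * L ^ 4 * c * α ^ 2 / μ)
        + T ^ 4 * L ^ 4 * c * α ^ 4 := by ring
  rw [hfactor]
  have hmain : 0 < T * α * (μ - T * L * α * μ - 2 * T ^ 2 * L ^ 4 * c * α ^ 2 / μ) :=
    mul_pos (mul_pos hT hα) (by linarith)
  positivity

end RateConditions

/-- any stepsize below the initial threshold of the learning-rate search
satisfies both strict learning-rate inequalities. -/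
theorem learning_rate_initial_valid
    (τ : ℕ) (hτ : 1 ≤ τ) (μ L α : ℝ) (hμ : 0 < μ) (hLμ : μ ≤ L)
    (hα : 0 < α)
    (hαlt : α < min (min (1 / (2 * (τ : ℝ) * L))
        (μ ^ 2 / (2 * (τ : ℝ) * (1 + 2 / (τ : ℝ)) ^ (2 * τ - 2) * L ^ 3)))
        (μ / (5 * (τ : ℝ) * (1 + 2 / (τ : ℝ)) ^ (2 * τ - 2) * L ^ 2))) :
    0 < 1 - (τ : ℝ) * μ * α
        + (τ : ℝ) * L ^ 2 * ((τ : ℝ) * α - 2 / μ) * (1 + 2 / (τ : ℝ)) ^ (2 * τ - 2) * α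
    ∧ 0 < (1 - (τ : ℝ) * L * α) * (τ : ℝ) * μ * α
        + (τ : ℝ) ^ 3 * L ^ 4 * ((τ : ℝ) * α - 2 / μ)
            * (1 + 2 / (τ : ℝ)) ^ (2 * τ - 2) * α ^ 3 := by
  have hL : 0 < L := hμ.trans_le hLμ
  have hτ₀ : (0 : ℝ) < τ := Nat.cast_pos.mpr hτ
  have hc : 0 ≤ (1 + 2 / (τ : ℝ)) ^ (2 * τ - 2) := by positivity
  rw [lt_min_iff, lt_min_iff] at hαlt
  obtain ⟨⟨h1, h2⟩, h3⟩ := hαlt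
  have h1' : 2 * (τ : ℝ) * L * α < 1 := (lt_div_iff₀' (by positivity)).mp h1
  exact ⟨first_rate_condition_pos hτ₀.le hc hμ hLμ hα.le h1'
      ((lt_div_iff₀' (by positivity)).mp h3),
    second_rate_condition_pos hτ₀ hc hμ hL.le hα h1' ((lt_div_iff₀' (by positivity)).mp h2)⟩
end

section
/- Let τ ≥ 1 be an integer and let 0 < μ ≤ L be reals, and set α = 2/(τL). Then (1 − τLα)τμα + τ³L⁴(τα − 2/μ)(1 + 2/τ)^{2τ−2}α³ < 0; that is, the second learning-rate search condition fails at α = 2/(τL), so the learning-rate search (which increases α from its initial value by a fixed stepsize while both conditions hold) terminates in finitely many steps. -/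
/-! At `α = 2/(τL)` we have `τLα = 2 > 1`, so the first summand `(1 - τLα)τμα` is negative, while
`τα = 2/L ≤ 2/μ` makes the second summand nonpositive whatever the (positive) power factor is. -/

theorem second_search_condition_neg {τ μ L α c : ℝ} (hτ : 0 < τ) (hμ : 0 < μ) (hα : 0 < α)
    (hc : 0 ≤ c) (hτLα : 1 < τ * L * α) (hτα : τ * α ≤ 2 / μ) :
    (1 - τ * L * α) * τ * μ * α + τ ^ 3 * L ^ 4 * (τ * α - 2 / μ) * c * α ^ 3 < 0 := by
  have hfirst : (1 - τ * L * α) * τ * μ * α < 0 :=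
    mul_neg_of_neg_of_pos
      (mul_neg_of_neg_of_pos (mul_neg_of_neg_of_pos (by linarith) hτ) hμ) hα
  have hsecond : τ ^ 3 * L ^ 4 * (τ * α - 2 / μ) * c * α ^ 3 ≤ 0 :=
    mul_nonpos_of_nonpos_of_nonneg
      (mul_nonpos_of_nonpos_of_nonneg
        (mul_nonpos_of_nonneg_of_nonpos (by positivity) (by linarith)) hc) (by positivity)
  linarith

/-- at `α = 2/(τL)` the second learning-rate search condition fails,
so the learning-rate search terminates in finitely many steps. -/
theorem learning_rate_search_terminates
    (τ : ℕ) (hτ : 1 ≤ τ) (μ L α : ℝ) (hμ : 0 < μ) (hLμ : μ ≤ L)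
    (hα : α = 2 / ((τ : ℝ) * L)) :
    (1 - (τ : ℝ) * L * α) * (τ : ℝ) * μ * α
      + (τ : ℝ) ^ 3 * L ^ 4 * ((τ : ℝ) * α - 2 / μ)
          * (1 + 2 / (τ : ℝ)) ^ (2 * τ - 2) * α ^ 3 < 0 := by
  have hL : 0 < L := hμ.trans_le hLμ
  have hτ_pos : (0 : ℝ) < τ := by exact_mod_cast hτ
  have hτLα : (τ : ℝ) * L * α = 2 := by rw [hα]; field_simp
  have hτα : (τ : ℝ) * α = 2 / L := by rw [hα]; field_simp
  apply second_search_condition_neg hτ_pos hμ (by rw [hα]; positivity) (by positivity)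
  · rw [hτLα]
    exact one_lt_two
  · rw [hτα]
    exact div_le_div_of_nonneg_left zero_le_two hμ hLμ
end
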